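/- arXiv:2106.04218 — 3 statements merged into one kernel-verified Lean document; each statement's English description precedes it below -/
import Mathlib

section
/- For 0 ≤ β ≤ 14.4, the density φ(x,β) = (1 + (β/576)·p₄(x))·(1/2)·sech(πx/2) with p₄(x)=x⁴−14x²+9 has mean 0, variance 1, and fourth moment 5 + β; that is, the polynomial modification adds exactly β to the kurtosis of the parent HS law. -/
/-
Expanding `1 / cosh y = 2 ∑ (-1)^j e^{-(2j+1) y}` (for `y > 0`) and integrating termwise against
`x^{2k}` gives `∫ x^{2k} · (1/2) sech(πx/2) dx = 2 (2k)! (2/π)^{2k+1} L(χ₄, 2k+1)`, with `χ₄` the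
nontrivial character mod 4. The Fourier series of the Bernoulli polynomials, evaluated at `1/4`,
gives `L(χ₄, 2k+1)` through `B_{2k+1}(1/4)`, so the even moments of the hyperbolic secant law are
the Euler numbers `1, 5, 61, 1385`; its odd moments vanish by symmetry. The moments of the modified
density are linear in these: the second one is unchanged because `∫ x² p₄ f = 61 - 14·5 + 9·1 = 0`,
and the fourth gains `β` because `∫ x⁴ p₄ f = 1385 - 14·61 + 9·5 = 576`.
-/

open MeasureTheory Real

noncomputable def hsDensity (x : ℝ) : ℝ := (1 / 2) * (Real.cosh (Real.pi * x / 2))⁻¹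

noncomputable def gchs (x β : ℝ) : ℝ :=
  (1 + (β / 576) * (x ^ 4 - 14 * x ^ 2 + 9)) * hsDensity x

open Set
open scoped Nat

theorem bernoulli'_six : bernoulli' 6 = 1 / 42 := by
  rw [bernoulli'_def]
  norm_num [Finset.sum_range_succ, bernoulli'_eq_zero_of_odd, Nat.choose]

theorem bernoulli'_eight : bernoulli' 8 = -1 / 30 := by
  rw [bernoulli'_def]
  norm_num [Finset.sum_range_succ, bernoulli'_eq_zero_of_odd, Nat.choose, bernoulli'_six]

theorem bernoulliFun_three_one_quarter : bernoulliFun 3 (1 / 4) = 3 / 64 := by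
  norm_num [bernoulliFun, Polynomial.bernoulli, Finset.sum_range_succ, Polynomial.eval_finsetSum,
    bernoulli_eq_bernoulli'_of_ne_one, bernoulli'_eq_zero_of_odd, Nat.choose]

theorem bernoulliFun_five_one_quarter : bernoulliFun 5 (1 / 4) = -25 / 1024 := by
  norm_num [bernoulliFun, Polynomial.bernoulli, Finset.sum_range_succ, Polynomial.eval_finsetSum,
    bernoulli_eq_bernoulli'_of_ne_one, bernoulli'_eq_zero_of_odd, Nat.choose]

theorem bernoulliFun_seven_one_quarter : bernoulliFun 7 (1 / 4) = 427 / 16384 := by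
  norm_num [bernoulliFun, Polynomial.bernoulli, Finset.sum_range_succ, Polynomial.eval_finsetSum,
    bernoulli_eq_bernoulli'_of_ne_one, bernoulli'_eq_zero_of_odd, Nat.choose, bernoulli'_six]

theorem bernoulliFun_nine_one_quarter : bernoulliFun 9 (1 / 4) = -12465 / 262144 := by
  norm_num [bernoulliFun, Polynomial.bernoulli, Finset.sum_range_succ, Polynomial.eval_finsetSum,
    bernoulli_eq_bernoulli'_of_ne_one, bernoulli'_eq_zero_of_odd, Nat.choose,
    bernoulli'_six, bernoulli'_eight]

theorem injective_two_mul_add_one : Function.Injective fun j : ℕ => 2 * j + 1 :=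
  fun a b hab => by simpa using hab

theorem hasSum_neg_one_pow_div_odd_pow {k : ℕ} (hk : k ≠ 0) :
    HasSum (fun j : ℕ => (-1 : ℝ) ^ j / (2 * j + 1) ^ (2 * k + 1))
      ((-1) ^ (k + 1) * (2 * π) ^ (2 * k + 1) / 2 / (2 * k + 1)! *
        bernoulliFun (2 * k + 1) (1 / 4)) := by
  have h := hasSum_one_div_nat_pow_mul_sin hk (x := 1 / 4) (by norm_num)
  -- `sin (π n / 2)` vanishes for even `n` and equals `(-1) ^ j` for `n = 2 j + 1`.
  rw [← injective_two_mul_add_one.hasSum_iff ?even] at h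
  case even =>
    intro n hn
    obtain ⟨m, rfl⟩ := Nat.not_odd_iff_even.mp fun ⟨m, hm⟩ => hn ⟨m, hm.symm⟩
    rw [show 2 * π * ((m + m : ℕ) : ℝ) * (1 / 4) = m * π by push_cast; ring, sin_nat_mul_pi,
      mul_zero]
  convert h using 2 with j
  · rw [Function.comp_apply, show 2 * π * ((2 * j + 1 : ℕ) : ℝ) * (1 / 4) = j * π + π / 2 by
      push_cast; ring, sin_add_pi_div_two, cos_nat_mul_pi]
    push_cast
    ring
  · rfl

theorem summable_one_div_odd_pow {p : ℕ} (hp : 1 < p) :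
    Summable fun j : ℕ => 1 / (2 * j + 1 : ℝ) ^ p := by
  simpa [Function.comp_def] using
    (Real.summable_one_div_nat_pow.mpr hp).comp_injective injective_two_mul_add_one

theorem integral_Ioi_pow_mul_exp_neg_mul (n : ℕ) {b : ℝ} (hb : 0 < b) :
    ∫ x in Ioi 0, x ^ n * exp (-(b * x)) = n ! / b ^ (n + 1) := by
  have := integral_rpow_mul_exp_neg_mul_Ioi (a := n + 1) (by positivity) hb
  simp_rw [add_sub_cancel_right, rpow_natCast] at this
  rw [this, Gamma_nat_eq_factorial, ← Nat.cast_add_one, rpow_natCast, one_div, inv_pow]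
  ring

theorem integrableOn_Ioi_pow_mul_exp_neg_mul (n : ℕ) {b : ℝ} (hb : 0 < b) :
    IntegrableOn (fun x => x ^ n * exp (-(b * x))) (Ioi 0) := by
  have := integrableOn_rpow_mul_exp_neg_mul_rpow (p := 1) (s := n)
    (by linarith [n.cast_nonneg (α := ℝ)]) one_pos hb
  refine this.congr_fun (fun x _ => ?_) measurableSet_Ioi
  simp only [rpow_natCast, rpow_one, neg_mul]

theorem hasSum_inv_cosh {x : ℝ} (hx : 0 < x) :
    HasSum (fun j : ℕ => 2 * (-1) ^ j * exp (-((2 * j + 1) * x))) (cosh x)⁻¹ := by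
  have hr : ‖-exp (-(2 * x))‖ < 1 := by
    rw [norm_neg, norm_of_nonneg (exp_pos _).le, exp_lt_one_iff]
    linarith
  have hsum : (cosh x)⁻¹ = 2 * exp (-x) * (1 - -exp (-(2 * x)))⁻¹ := by
    rw [cosh_eq, sub_neg_eq_add, show -(2 * x) = -x + -x by ring, exp_add]
    field_simp
    rw [mul_add, ← exp_add, neg_add_cancel, exp_zero]
    ring
  have hterm (j : ℕ) : 2 * (-1) ^ j * exp (-((2 * j + 1) * x))
      = 2 * exp (-x) * (-exp (-(2 * x))) ^ j := by
    rw [neg_pow (exp _), ← exp_nat_mul, show -((2 * j + 1) * x) = -x + j * -(2 * x) by ring,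
      exp_add]
    ring
  simpa only [hsum, hterm] using (hasSum_geometric_of_norm_lt_one hr).mul_left (2 * exp (-x))

theorem inv_cosh_le_two_mul_exp_neg (x : ℝ) : (cosh x)⁻¹ ≤ 2 * exp (-x) := by
  have h : exp x * exp (-x) = 1 := by rw [← exp_add, add_neg_cancel, exp_zero]
  rw [inv_le_iff_one_le_mul₀ (cosh_pos x), cosh_eq]
  nlinarith [exp_pos (-x)]

theorem continuous_pow_mul_inv_cosh (n : ℕ) (c : ℝ) :
    Continuous fun x => x ^ n * (cosh (c * x))⁻¹ := by
  fun_prop (disch := exact fun x => (cosh_pos _).ne')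

theorem integrableOn_Ioi_pow_mul_inv_cosh (n : ℕ) {c : ℝ} (hc : 0 < c) :
    IntegrableOn (fun x => x ^ n * (cosh (c * x))⁻¹) (Ioi 0) := by
  refine ((integrableOn_Ioi_pow_mul_exp_neg_mul n hc).const_mul 2).mono'
    (continuous_pow_mul_inv_cosh n c).aestronglyMeasurable.restrict ?_
  filter_upwards [ae_restrict_mem measurableSet_Ioi] with x (hx : 0 < x)
  rw [norm_of_nonneg (by positivity), mul_left_comm]
  exact mul_le_mul_of_nonneg_left (inv_cosh_le_two_mul_exp_neg _) (by positivity)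

theorem integrable_comp_abs_of_integrableOn_Ioi {E : Type*} [NormedAddCommGroup E] {f : ℝ → E}
    (hf : IntegrableOn f (Ioi 0)) : Integrable fun x => f |x| := by
  have hIoi : IntegrableOn (fun x => f |x|) (Ioi 0) :=
    hf.congr_fun (fun x (hx : 0 < x) => by rw [abs_of_pos hx]) measurableSet_Ioi
  have hIic : IntegrableOn (fun x => f |x|) (Iic 0) := by
    have hneg : MeasurableEmbedding fun x : ℝ => -x := (Homeomorph.neg ℝ).measurableEmbedding
    rw [← Measure.map_neg_eq_self (volume : Measure ℝ), hneg.integrableOn_map_iff]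
    simp_rw [Function.comp_def, abs_neg, neg_preimage, neg_Iic, neg_zero]
    exact (integrableOn_Ici_iff_integrableOn_Ioi (by finiteness)).2 hIoi
  rw [← integrableOn_univ, ← Iic_union_Ioi (a := 0)]
  exact hIic.union hIoi

theorem integrable_pow_mul_inv_cosh (n : ℕ) {c : ℝ} (hc : 0 < c) :
    Integrable fun x => x ^ n * (cosh (c * x))⁻¹ := by
  refine (integrable_comp_abs_of_integrableOn_Ioi (integrableOn_Ioi_pow_mul_inv_cosh n hc)).mono'
    (continuous_pow_mul_inv_cosh n c).aestronglyMeasurable (ae_of_all _ fun x => le_of_eq ?_)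
  rw [norm_mul, norm_pow, norm_inv, norm_of_nonneg (cosh_pos _).le, ← cosh_abs, abs_mul,
    abs_of_pos hc, Real.norm_eq_abs]

theorem hasSum_integral_Ioi_pow_mul_inv_cosh {n : ℕ} (hn : n ≠ 0) {c : ℝ} (hc : 0 < c) :
    HasSum (fun j : ℕ => 2 * n ! / c ^ (n + 1) * ((-1) ^ j / (2 * j + 1) ^ (n + 1)))
      (∫ x in Ioi 0, x ^ n * (cosh (c * x))⁻¹) := by
  let F (j : ℕ) (x : ℝ) : ℝ := x ^ n * (2 * (-1) ^ j * exp (-((2 * j + 1) * (c * x))))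
  have hF (j : ℕ) : F j = fun x => 2 * (-1) ^ j * (x ^ n * exp (-((2 * j + 1) * c * x))) := by
    ext x; simp only [F]; ring_nf
  have hb (j : ℕ) : 0 < (2 * j + 1) * c := by positivity
  have hF_int (j : ℕ) : IntegrableOn (F j) (Ioi 0) := by
    rw [hF]; exact (integrableOn_Ioi_pow_mul_exp_neg_mul n (hb j)).const_mul _
  have hF_integral (j : ℕ) : ∫ x in Ioi 0, F j x
      = 2 * n ! / c ^ (n + 1) * ((-1) ^ j / (2 * j + 1) ^ (n + 1)) := by
    rw [hF, integral_const_mul, integral_Ioi_pow_mul_exp_neg_mul n (hb j), mul_pow]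
    field_simp
  have hF_norm (j : ℕ) : ∫ x in Ioi 0, ‖F j x‖
      = 2 * n ! / c ^ (n + 1) * (1 / (2 * j + 1) ^ (n + 1)) := by
    rw [hF, setIntegral_congr_fun measurableSet_Ioi fun x (hx : 0 < x) => by
      rw [norm_mul, norm_mul, norm_pow, norm_neg, norm_one, one_pow, mul_one, Real.norm_two,
        norm_of_nonneg (by positivity)], integral_const_mul,
      integral_Ioi_pow_mul_exp_neg_mul n (hb j), mul_pow]
    field_simp
  have hF_summable : Summable fun j => ∫ x in Ioi 0, ‖F j x‖ := by
    simpa only [hF_norm] using (summable_one_div_odd_pow (by omega)).mul_left _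
  have hF_tsum : ∫ x in Ioi 0, ∑' j, F j x = ∫ x in Ioi 0, x ^ n * (cosh (c * x))⁻¹ :=
    setIntegral_congr_fun measurableSet_Ioi fun x hx =>
      ((hasSum_inv_cosh (mul_pos hc hx)).mul_left (x ^ n)).tsum_eq
  simpa only [hF_integral, hF_tsum] using
    hasSum_integral_of_summable_integral_norm hF_int hF_summable

theorem integral_eq_zero_of_odd {f : ℝ → ℝ} (hf : Function.Odd f) : ∫ x, f x = 0 := by
  have h := integral_neg_eq_self f volume
  rw [funext hf, integral_neg] at h
  linarith

theorem hsDensity_eq (x : ℝ) : hsDensity x = 2⁻¹ * (cosh (π / 2 * x))⁻¹ := by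
  rw [hsDensity, one_div, div_mul_eq_mul_div, mul_div_right_comm]

theorem hsDensity_abs (x : ℝ) : hsDensity |x| = hsDensity x := by
  rw [hsDensity_eq, hsDensity_eq, ← cosh_abs, abs_mul, abs_abs, ← abs_mul, cosh_abs]

theorem integrable_pow_mul_hsDensity (n : ℕ) : Integrable fun x => x ^ n * hsDensity x := by
  simpa only [hsDensity_eq, mul_left_comm _ (2⁻¹ : ℝ)] using
    (integrable_pow_mul_inv_cosh n (c := π / 2) (by positivity)).const_mul 2⁻¹

theorem integral_pow_mul_hsDensity_of_odd {n : ℕ} (hn : Odd n) : ∫ x, x ^ n * hsDensity x = 0 :=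
  integral_eq_zero_of_odd fun x => by
    rw [← hsDensity_abs, abs_neg, hsDensity_abs, hn.neg_pow, neg_mul]

theorem integral_even_pow_mul_hsDensity {k : ℕ} (hk : k ≠ 0) :
    ∫ x, x ^ (2 * k) * hsDensity x
      = (-1) ^ (k + 1) * 4 ^ (2 * k + 1) / (2 * k + 1) * bernoulliFun (2 * k + 1) (1 / 4) := by
  have hcosh := hasSum_integral_Ioi_pow_mul_inv_cosh (n := 2 * k) (by omega) (c := π / 2)
    (by positivity)
  have hbeta := (hasSum_neg_one_pow_div_odd_pow hk).mul_left
    (2 * (2 * k) ! / (π / 2) ^ (2 * k + 1))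
  have heven : (fun x => x ^ (2 * k) * hsDensity x) = fun x => |x| ^ (2 * k) * hsDensity |x| := by
    ext x; rw [hsDensity_abs, pow_mul, pow_mul, sq_abs]
  rw [heven, integral_comp_abs (f := fun x => x ^ (2 * k) * hsDensity x)]
  simp_rw [hsDensity_eq, mul_left_comm _ (2⁻¹ : ℝ), integral_const_mul, hcosh.unique hbeta]
  rw [Nat.factorial_succ, show (4 : ℝ) = 2 * 2 by norm_num, div_pow, mul_pow, mul_pow]
  push_cast
  field_simp

theorem integral_sq_mul_hsDensity : ∫ x, x ^ 2 * hsDensity x = 1 := by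
  have h := integral_even_pow_mul_hsDensity one_ne_zero
  norm_num [bernoulliFun_three_one_quarter] at h
  exact h

theorem integral_pow_four_mul_hsDensity : ∫ x, x ^ 4 * hsDensity x = 5 := by
  have h := integral_even_pow_mul_hsDensity two_ne_zero
  norm_num [bernoulliFun_five_one_quarter] at h
  exact h

theorem integral_pow_six_mul_hsDensity : ∫ x, x ^ 6 * hsDensity x = 61 := by
  have h := integral_even_pow_mul_hsDensity three_ne_zero
  norm_num [bernoulliFun_seven_one_quarter] at h
  exact h

theorem integral_pow_eight_mul_hsDensity : ∫ x, x ^ 8 * hsDensity x = 1385 := by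
  have h := integral_even_pow_mul_hsDensity four_ne_zero
  norm_num [bernoulliFun_nine_one_quarter] at h
  exact h

theorem integral_pow_mul_gchs (m : ℕ) (β : ℝ) :
    ∫ x, x ^ m * gchs x β = (∫ x, x ^ m * hsDensity x) + β / 576 *
      ((∫ x, x ^ (m + 4) * hsDensity x) - 14 * (∫ x, x ^ (m + 2) * hsDensity x)
        + 9 * ∫ x, x ^ m * hsDensity x) := by
  have hI := integrable_pow_mul_hsDensity
  have hexpand : (fun x => x ^ m * gchs x β) = fun x => x ^ m * hsDensity x + β / 576 *
      (x ^ (m + 4) * hsDensity x - 14 * (x ^ (m + 2) * hsDensity x)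
        + 9 * (x ^ m * hsDensity x)) := by
    ext x; rw [gchs]; ring
  rw [hexpand, integral_add, integral_const_mul, integral_add, integral_sub, integral_const_mul,
    integral_const_mul]
  all_goals fun_prop

theorem gchs_moments_general {β : ℝ} :
    (∫ x : ℝ, x * gchs x β = 0) ∧
    (∫ x : ℝ, x ^ 2 * gchs x β = 1) ∧
    (∫ x : ℝ, x ^ 4 * gchs x β = 5 + β) := by
  refine ⟨?_, ?_, ?_⟩
  · have h := integral_pow_mul_gchs 1 β
    rw [integral_pow_mul_hsDensity_of_odd (n := 1) (by decide),
      integral_pow_mul_hsDensity_of_odd (n := 1 + 4) (by decide),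
      integral_pow_mul_hsDensity_of_odd (n := 1 + 2) (by decide)] at h
    simpa using h
  · rw [integral_pow_mul_gchs, integral_sq_mul_hsDensity, integral_pow_four_mul_hsDensity,
      integral_pow_six_mul_hsDensity]
    ring
  · rw [integral_pow_mul_gchs, integral_pow_four_mul_hsDensity, integral_pow_six_mul_hsDensity,
      integral_pow_eight_mul_hsDensity]
    ring

theorem gchs_moments {β : ℝ} (h0 : 0 ≤ β) (h1 : β ≤ 14.4) :
    (∫ x : ℝ, x * gchs x β = 0) ∧
    (∫ x : ℝ, x ^ 2 * gchs x β = 1) ∧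
    (∫ x : ℝ, x ^ 4 * gchs x β = 5 + β) :=
  gchs_moments_general
end

section
/- The density of the sum of two independent standardized hyperbolic secant random variables is g(y) = (y/2)·csch(πy/2); equivalently, the convolution of f(x)=(1/2)sech(πx/2) with itself equals (y/2)·csch(πy/2), where the value at y=0 is taken as the limit 1/π. -/
open MeasureTheory Real

/-- The convoluted linear hyperbolic density, with the removable singularity
at `0` filled in by the limit value `1/π`. -/
noncomputable def clhDensity (y : ℝ) : ℝ :=
  if y = 0 then 1 / Real.pi else (y / 2) * (Real.sinh (Real.pi * y / 2))⁻¹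

/-! Substituting `u = π x / 2` turns the convolution into `(2π)⁻¹ ∫ sech u sech (a - u) du`
with `a = π y / 2`. By the addition formula for `sinh`,
`sinh a · sech u · sech (a - u) = tanh u + tanh (a - u)`, whose primitive
`log cosh u - log cosh (a - u)` tends to `±a` at `±∞` because `log cosh t - |t| → -log 2`;
hence the integral is `2a / sinh a`. For `a = 0` the integrand is `sech²`, with primitive `tanh`,
and the integral is `2`. -/

open Filter Topology

namespace Real

lemma one_add_sq_div_two_le_cosh (u : ℝ) : 1 + u ^ 2 / 2 ≤ cosh u := by
  have hsinh : (u / 2) ^ 2 ≤ sinh (u / 2) ^ 2 :=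
    sq_le_sq.2 (by rw [abs_sinh]; exact self_le_sinh_iff.2 (abs_nonneg _))
  have hcosh := cosh_two_mul (u / 2)
  rw [mul_div_cancel₀ u two_ne_zero, cosh_sq'] at hcosh
  nlinarith

lemma continuous_inv_cosh : Continuous fun u : ℝ => (cosh u)⁻¹ :=
  continuous_cosh.inv₀ fun u => (cosh_pos u).ne'

lemma integrable_inv_cosh : Integrable fun u : ℝ => (cosh u)⁻¹ := by
  refine (integrable_inv_one_add_sq.const_mul 2).mono' continuous_inv_cosh.aestronglyMeasurable
    (Eventually.of_forall fun u => ?_)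
  rw [norm_inv, norm_of_nonneg (cosh_pos u).le]
  calc (cosh u)⁻¹ ≤ ((1 + u ^ 2) / 2)⁻¹ :=
        inv_anti₀ (by positivity) (by linarith [one_add_sq_div_two_le_cosh u])
    _ = 2 * (1 + u ^ 2)⁻¹ := by rw [inv_div, div_eq_mul_inv]

lemma integrable_inv_cosh_mul_inv_cosh_sub (a : ℝ) :
    Integrable fun u : ℝ => (cosh u)⁻¹ * (cosh (a - u))⁻¹ :=
  integrable_inv_cosh.mul_bdd
    (continuous_inv_cosh.comp (continuous_sub_left a)).aestronglyMeasurable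
    (Eventually.of_forall fun u => by
      rw [norm_inv, norm_of_nonneg (cosh_pos _).le]
      exact inv_le_one_of_one_le₀ (one_le_cosh _))

lemma tanh_eq_one_sub (t : ℝ) : tanh t = 1 - 2 / (exp (2 * t) + 1) := by
  have hexp : exp t * exp t = exp (2 * t) := by rw [← exp_add, two_mul]
  rw [tanh_eq, exp_neg]
  field_simp
  linear_combination 2 * hexp

lemma tendsto_tanh_atTop : Tendsto tanh atTop (𝓝 1) := by
  have hden : Tendsto (fun t : ℝ => exp (2 * t) + 1) atTop atTop :=
    tendsto_atTop_add_const_right _ 1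
      (tendsto_exp_atTop.comp (tendsto_id.const_mul_atTop two_pos))
  simpa [funext tanh_eq_one_sub, div_eq_mul_inv] using
    (hden.inv_tendsto_atTop.const_mul 2).const_sub 1

lemma tendsto_tanh_atBot : Tendsto tanh atBot (𝓝 (-1)) := by
  simpa [Function.comp_def, tanh_neg] using
    (tendsto_tanh_atTop.comp tendsto_neg_atBot_atTop).neg

lemma hasDerivAt_tanh (t : ℝ) : HasDerivAt tanh (cosh t ^ 2)⁻¹ t := by
  have h := (hasDerivAt_sinh t).div (hasDerivAt_cosh t) (cosh_pos t).ne'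
  rw [show tanh = sinh / cosh from funext fun t => tanh_eq_sinh_div_cosh t]
  refine h.congr_deriv ?_
  rw [← sq, ← sq, cosh_sq_sub_sinh_sq, one_div]

lemma hasDerivAt_log_cosh (t : ℝ) : HasDerivAt (fun t => log (cosh t)) (tanh t) t := by
  simpa [tanh_eq_sinh_div_cosh] using (hasDerivAt_cosh t).log (cosh_pos t).ne'

lemma log_cosh_sub_self (t : ℝ) : log (cosh t) - t = log ((1 + exp (-(2 * t))) / 2) := by
  have hcosh : cosh t = exp t * ((1 + exp (-(2 * t))) / 2) := by
    rw [cosh_eq, mul_div_assoc', mul_add, mul_one, ← exp_add]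
    ring_nf
  rw [hcosh, log_mul (exp_ne_zero t) (by positivity), log_exp]
  ring

lemma tendsto_log_cosh_sub_self_atTop :
    Tendsto (fun t => log (cosh t) - t) atTop (𝓝 (-log 2)) := by
  have harg : Tendsto (fun t : ℝ => (1 + exp (-(2 * t))) / 2) atTop (𝓝 2⁻¹) := by
    have hexp := tendsto_exp_atBot.comp
      (tendsto_neg_atTop_atBot.comp (tendsto_id.const_mul_atTop two_pos))
    simpa [Function.comp_def] using (hexp.const_add 1).div_const 2
  simpa [Function.comp_def, log_cosh_sub_self, log_inv] using
    ((continuousAt_log (by norm_num)).tendsto.comp harg)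

lemma tendsto_log_cosh_add_sub_log_cosh_add_atTop (b c : ℝ) :
    Tendsto (fun u => log (cosh (u + b)) - log (cosh (u + c))) atTop (𝓝 (b - c)) := by
  have shift (d : ℝ) : Tendsto (fun u => log (cosh (u + d)) - (u + d)) atTop (𝓝 (-log 2)) :=
    tendsto_log_cosh_sub_self_atTop.comp (tendsto_atTop_add_const_right _ d tendsto_id)
  convert ((shift b).sub (shift c)).add_const (b - c) using 2
  · ring
  · ring

lemma integral_inv_cosh_sq : ∫ u, (cosh u ^ 2)⁻¹ = 2 := by
  have hint : Integrable fun u : ℝ => (cosh u ^ 2)⁻¹ := by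
    simpa [cosh_neg, ← mul_inv, ← sq] using integrable_inv_cosh_mul_inv_cosh_sub 0
  rw [integral_of_hasDerivAt_of_tendsto hasDerivAt_tanh hint tendsto_tanh_atBot
    tendsto_tanh_atTop]
  norm_num

lemma integral_inv_cosh_mul_inv_cosh_sub {a : ℝ} (ha : a ≠ 0) :
    ∫ u, (cosh u)⁻¹ * (cosh (a - u))⁻¹ = 2 * a / sinh a := by
  have hsinh : sinh a ≠ 0 := sinh_ne_zero.2 ha
  have hderiv (u : ℝ) : HasDerivAt (fun u => (log (cosh u) - log (cosh (a - u))) / sinh a)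
      ((cosh u)⁻¹ * (cosh (a - u))⁻¹) u := by
    refine (((hasDerivAt_log_cosh u).sub ((hasDerivAt_log_cosh (a - u)).comp u
      ((hasDerivAt_id u).const_sub a))).div_const (sinh a)).congr_deriv ?_
    have hadd : sinh a = sinh u * cosh (a - u) + cosh u * sinh (a - u) := by
      rw [← sinh_add, add_sub_cancel]
    simp only [tanh_eq_sinh_div_cosh]
    field_simp [(cosh_pos u).ne', (cosh_pos (a - u)).ne']
    linear_combination -hadd
  have hcosh (u : ℝ) : cosh (a - u) = cosh (u - a) := by rw [← cosh_neg, neg_sub]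
  have htop : Tendsto (fun u => log (cosh u) - log (cosh (a - u))) atTop (𝓝 a) := by
    simp only [hcosh]
    simpa [sub_eq_add_neg] using tendsto_log_cosh_add_sub_log_cosh_add_atTop 0 (-a)
  have hbot : Tendsto (fun u => log (cosh u) - log (cosh (a - u))) atBot (𝓝 (-a)) := by
    simpa [Function.comp_def, sub_eq_add_neg, add_comm] using
      (tendsto_log_cosh_add_sub_log_cosh_add_atTop 0 a).comp tendsto_neg_atBot_atTop
  rw [integral_of_hasDerivAt_of_tendsto hderiv (integrable_inv_cosh_mul_inv_cosh_sub a)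
    (hbot.div_const _) (htop.div_const _)]
  ring

end Real

lemma integral_hsDensity_mul_hsDensity_sub (y : ℝ) :
    ∫ x, hsDensity x * hsDensity (y - x)
      = (2 * π)⁻¹ * ∫ u, (cosh u)⁻¹ * (cosh (π * y / 2 - u))⁻¹ := by
  have hscale (x : ℝ) : hsDensity x * hsDensity (y - x)
      = 4⁻¹ * ((cosh (π / 2 * x))⁻¹ * (cosh (π * y / 2 - π / 2 * x))⁻¹) := by
    simp only [hsDensity]
    ring_nf
  simp_rw [hscale]
  rw [integral_const_mul, Measure.integral_comp_mul_left
    (fun u => (cosh u)⁻¹ * (cosh (π * y / 2 - u))⁻¹), smul_eq_mul,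
    abs_of_pos (by positivity : (0 : ℝ) < (π / 2)⁻¹)]
  ring

theorem hs_self_convolution (y : ℝ) :
    ∫ x : ℝ, hsDensity x * hsDensity (y - x) = clhDensity y := by
  rw [integral_hsDensity_mul_hsDensity_sub, clhDensity]
  split_ifs with hy
  · simp only [hy, mul_zero, zero_div, zero_sub, cosh_neg, ← sq, inv_pow, integral_inv_cosh_sq]
    field_simp
  · have ha : π * y / 2 ≠ 0 := by simp [hy, pi_ne_zero]
    rw [integral_inv_cosh_mul_inv_cosh_sub ha]
    field_simp
end

section
/- The density of the sum of three independent standardized hyperbolic secant random variables is g(y) = (1/4)·sech(πy/2)·(y² + 1); equivalently, ∫_{-∞}^{∞} e^{iωy} · (1/4)·sech(πy/2)·(y²+1) dy = sech(ω)³ for all real ω. -/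
/-!
Let `p y = (2 cosh (π y / 2))⁻¹`. The substitutions `u = π y`, `t = sigmoid u` turn
`∫ e^{z y} p y dy` into the Beta integral `B(a, 1 - a) = π / sin (π a)` with `a = 1/2 + z / π`,
so the law with density `p` has moment generating function `sec z` on the strip `|Re z| < π / 2`.
In particular its characteristic function is `φ = sech` and it has moments of all orders.
The target density is `(y² + 1) p y / 2`, whose Fourier transform is therefore
`(φ - φ'') / 2 = sech³`, since `sech'' = sech - 2 sech³`.
-/

open MeasureTheory Real

open Set ProbabilityTheory
open scoped Complex NNReal
open Complex (I)

namespace Complex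

theorem betaIntegral_one_sub {a : ℂ} (ha₀ : 0 < a.re) (ha₁ : a.re < 1) :
    betaIntegral a (1 - a) = π / sin (π * a) := by
  have h := Gamma_mul_Gamma_eq_betaIntegral ha₀ (by simpa using ha₁ : 0 < (1 - a).re)
  rwa [Gamma_mul_Gamma_one_sub, add_sub_cancel, Gamma_one, one_mul, eq_comm] at h

theorem ofReal_exp_cpow (x : ℝ) (a : ℂ) : (rexp x : ℂ) ^ a = cexp (x * a) := by
  rw [cpow_def_of_ne_zero (by exact_mod_cast (exp_pos x).ne'), ← ofReal_log (exp_pos x).le,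
    Real.log_exp]

end Complex

theorem iteratedDeriv_two_ofReal_sech (t : ℝ) :
    iteratedDeriv 2 (fun t : ℝ ↦ (((cosh t)⁻¹ : ℝ) : ℂ)) t
      = (((cosh t)⁻¹ - 2 * (cosh t)⁻¹ ^ 3 : ℝ) : ℂ) := by
  have hderiv (s : ℝ) : HasDerivAt (fun t : ℝ ↦ (cosh t)⁻¹) (-(sinh s / cosh s ^ 2)) s :=
    ((hasDerivAt_cosh s).inv (cosh_pos s).ne').congr_deriv (by ring)
  have hderiv₂ : HasDerivAt (fun t : ℝ ↦ -(sinh t / cosh t ^ 2))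
      ((cosh t)⁻¹ - 2 * (cosh t)⁻¹ ^ 3) t := by
    have hc := (cosh_pos t).ne'
    refine ((hasDerivAt_sinh t).div ((hasDerivAt_cosh t).pow 2)
      (pow_ne_zero 2 hc)).neg.congr_deriv ?_
    simp only [Pi.pow_apply, Nat.cast_ofNat, Nat.add_one_sub_one, pow_one]
    field_simp
    linear_combination -2 * cosh_sq_sub_sinh_sq t
  rw [iteratedDeriv_succ, iteratedDeriv_one, funext fun s ↦ (hderiv s).ofReal_comp.deriv]
  exact hderiv₂.ofReal_comp.deriv

section SigmoidSubstitution

open Complex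

/-- The integrand of `betaIntegral a (1 - a)` pulled back along `sigmoid : ℝ → (0, 1)`. -/
theorem abs_deriv_sigmoid_smul_betaIntegrand (a : ℂ) (y : ℝ) :
    |sigmoid y * (1 - sigmoid y)| •
        ((sigmoid y : ℂ) ^ (a - 1) * (1 - (sigmoid y : ℂ)) ^ (1 - a - 1))
      = cexp (a * y) / (1 + rexp y) := by
  set r := sigmoid (-y)
  have hr : 0 < r := sigmoid_pos _
  have hrC : (r : ℂ) ≠ 0 := by exact_mod_cast hr.ne'
  have hs : sigmoid y = r * rexp y := by simpa [r, eq_comm] using sigmoid_mul_rexp_neg (-y)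
  have h1s : (1 - sigmoid y : ℝ) = r := (sigmoid_neg y).symm
  have hr' : r = (1 + rexp y)⁻¹ := by simp [r, sigmoid_def]
  have hpow : (r : ℂ) ^ (a - 1) * (r : ℂ) ^ (-a) = (r : ℂ)⁻¹ := by
    rw [← cpow_add _ _ hrC, show a - 1 + -a = -1 by ring, cpow_neg_one]
  have hexp : cexp (y * (a - 1)) * rexp y = cexp (a * y) := by
    rw [ofReal_exp, ← Complex.exp_add]; ring_nf
  rw [abs_of_pos (mul_pos (sigmoid_pos y) (by linarith [sigmoid_lt_one y])),
    show 1 - (sigmoid y : ℂ) = r by exact_mod_cast h1s, h1s, hs, ofReal_mul,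
    mul_cpow_ofReal_nonneg hr.le (exp_pos y).le, ofReal_exp_cpow, real_smul,
    show 1 - a - 1 = -a by ring]
  calc _ = r * (cexp (y * (a - 1)) * rexp y) * (r * ((r : ℂ) ^ (a - 1) * (r : ℂ) ^ (-a))) := by
        push_cast; ring
    _ = _ := by
        rw [hpow, hexp, mul_inv_cancel₀ hrC, hr']
        push_cast
        field_simp

variable {a : ℂ}

theorem integral_cexp_mul_div_one_add_exp (ha₀ : 0 < a.re) (ha₁ : a.re < 1) :
    ∫ y : ℝ, cexp (a * y) / (1 + rexp y) = π / sin (π * a) := by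
  have h := integral_image_eq_integral_abs_deriv_smul MeasurableSet.univ
    (fun y _ ↦ (hasDerivAt_sigmoid y).hasDerivWithinAt) sigmoid_injective.injOn
    (fun t : ℝ ↦ (t : ℂ) ^ (a - 1) * (1 - (t : ℂ)) ^ (1 - a - 1))
  simp only [image_univ, range_sigmoid, setIntegral_univ,
    abs_deriv_sigmoid_smul_betaIntegrand] at h
  rw [← h, ← integral_Ioc_eq_integral_Ioo, ← intervalIntegral.integral_of_le zero_le_one,
    ← betaIntegral_one_sub ha₀ ha₁, betaIntegral]

theorem integrable_cexp_mul_div_one_add_exp (ha₀ : 0 < a.re) (ha₁ : a.re < 1) :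
    Integrable fun y : ℝ ↦ cexp (a * y) / (1 + rexp y) := by
  have h := integrableOn_image_iff_integrableOn_abs_deriv_smul MeasurableSet.univ
    (fun y _ ↦ (hasDerivAt_sigmoid y).hasDerivWithinAt) sigmoid_injective.injOn
    (fun t : ℝ ↦ (t : ℂ) ^ (a - 1) * (1 - (t : ℂ)) ^ (1 - a - 1))
  simp only [image_univ, range_sigmoid, integrableOn_univ,
    abs_deriv_sigmoid_smul_betaIntegrand] at h
  refine h.1 ?_
  have hbeta := betaIntegral_convergent ha₀ (by simpa using ha₁ : 0 < (1 - a).re)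
  exact ((intervalIntegrable_iff_integrableOn_Ioc_of_le zero_le_one).1 hbeta).mono_set
    Ioo_subset_Ioc_self

end SigmoidSubstitution

/-- The density of the standardized (mean `0`, variance `1`) hyperbolic secant law. -/
noncomputable def hyperbolicSecantPDFReal (y : ℝ) : ℝ := (2 * cosh (π * y / 2))⁻¹

theorem hyperbolicSecantPDFReal_pos (y : ℝ) : 0 < hyperbolicSecantPDFReal y := by
  unfold hyperbolicSecantPDFReal; positivity

@[fun_prop]
theorem measurable_hyperbolicSecantPDFReal : Measurable hyperbolicSecantPDFReal := by
  unfold hyperbolicSecantPDFReal; fun_prop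

theorem cexp_mul_hyperbolicSecantPDFReal (z : ℂ) (y : ℝ) :
    cexp (z * y) * hyperbolicSecantPDFReal y
      = cexp ((1 / 2 + z / π) * ↑(π * y)) / (1 + rexp (π * y)) := by
  have hsplit : (1 / 2 + z / π) * ↑(π * y) = ↑(π * y / 2) + z * y := by
    push_cast; field_simp
  have hcosh : 1 + rexp (π * y) = rexp (π * y / 2) * (2 * cosh (π * y / 2)) := by
    have h₁ : rexp (π * y) = rexp (π * y / 2) * rexp (π * y / 2) := by rw [← exp_add]; ring_nf
    have h₂ : rexp (π * y / 2) * rexp (-(π * y / 2)) = 1 := by rw [← exp_add]; simp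
    rw [cosh_eq]
    linear_combination h₁ - h₂
  rw [hsplit, Complex.exp_add, ← Complex.ofReal_exp, ← Complex.ofReal_one, ← Complex.ofReal_add,
    hcosh, hyperbolicSecantPDFReal]
  push_cast
  field_simp

section MomentGeneratingFunction

variable {z : ℂ}

theorem re_one_half_add_div_pi_mem_Ioo (hz : |z.re| < π / 2) :
    (1 / 2 + z / π).re ∈ Ioo 0 1 := by
  have hre : (1 / 2 + z / π).re = 1 / 2 + z.re / π := by simp [Complex.div_ofReal_re]
  rw [hre]
  obtain ⟨hlow, hup⟩ := abs_lt.1 hz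
  constructor
  · have : -(1 / 2) < z.re / π := by rw [lt_div_iff₀ pi_pos]; linarith
    linarith
  · have : z.re / π < 1 / 2 := by rw [div_lt_iff₀ pi_pos]; linarith
    linarith

theorem integral_cexp_mul_hyperbolicSecantPDFReal (hz : |z.re| < π / 2) :
    ∫ y : ℝ, cexp (z * y) * hyperbolicSecantPDFReal y = (Complex.cos z)⁻¹ := by
  obtain ⟨ha₀, ha₁⟩ := re_one_half_add_div_pi_mem_Ioo hz
  simp_rw [cexp_mul_hyperbolicSecantPDFReal]
  rw [Measure.integral_comp_mul_left (fun u : ℝ ↦ cexp ((1 / 2 + z / π) * u) / (1 + rexp u)),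
    integral_cexp_mul_div_one_add_exp ha₀ ha₁,
    show (π : ℂ) * (1 / 2 + z / π) = z + π / 2 by field_simp; ring, Complex.sin_add_pi_div_two,
    abs_of_pos (inv_pos.2 pi_pos), Complex.real_smul]
  push_cast
  field_simp

theorem integrable_cexp_mul_hyperbolicSecantPDFReal (hz : |z.re| < π / 2) :
    Integrable fun y : ℝ ↦ cexp (z * y) * hyperbolicSecantPDFReal y := by
  obtain ⟨ha₀, ha₁⟩ := re_one_half_add_div_pi_mem_Ioo hz
  simp_rw [cexp_mul_hyperbolicSecantPDFReal]
  exact (integrable_cexp_mul_div_one_add_exp ha₀ ha₁).comp_mul_left' pi_ne_zero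

end MomentGeneratingFunction

noncomputable def hyperbolicSecantReal : Measure ℝ :=
  volume.withDensity fun y ↦ ENNReal.ofReal (hyperbolicSecantPDFReal y)

theorem integral_hyperbolicSecantReal_eq_integral_smul {E : Type*} [NormedAddCommGroup E]
    [NormedSpace ℝ E] (f : ℝ → E) :
    ∫ y, f y ∂hyperbolicSecantReal = ∫ y, hyperbolicSecantPDFReal y • f y := by
  rw [hyperbolicSecantReal, integral_withDensity_eq_integral_toReal_smul
    measurable_hyperbolicSecantPDFReal.ennreal_ofReal (ae_of_all _ fun _ ↦ ENNReal.ofReal_lt_top)]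
  simp_rw [ENNReal.toReal_ofReal (hyperbolicSecantPDFReal_pos _).le]

theorem charFun_hyperbolicSecantReal (t : ℝ) :
    charFun hyperbolicSecantReal t = ((cosh t)⁻¹ : ℝ) := by
  have h := integral_cexp_mul_hyperbolicSecantPDFReal (z := t * I) (by simpa using pi_div_two_pos)
  rw [Complex.cos_mul_I] at h
  rw [charFun_apply_real, integral_hyperbolicSecantReal_eq_integral_smul]
  push_cast
  rw [← h]
  congr 1 with y
  rw [Complex.real_smul]; ring_nf

-- The total mass is the value of the characteristic function at `0`.
instance : IsProbabilityMeasure hyperbolicSecantReal := by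
  have h := charFun_zero hyperbolicSecantReal
  rw [charFun_hyperbolicSecantReal, cosh_zero, inv_one, Complex.ofReal_one] at h
  exact ⟨(ENNReal.toReal_eq_one_iff _).1 (by exact_mod_cast h.symm)⟩

theorem integrable_exp_mul_hyperbolicSecantReal {t : ℝ} (ht : |t| < π / 2) :
    Integrable (fun y ↦ rexp (t * y)) hyperbolicSecantReal := by
  rw [hyperbolicSecantReal, integrable_withDensity_iff
    measurable_hyperbolicSecantPDFReal.ennreal_ofReal (ae_of_all _ fun _ ↦ ENNReal.ofReal_lt_top)]
  refine (integrable_cexp_mul_hyperbolicSecantPDFReal (z := t) (by simpa using ht)).norm.congr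
    (ae_of_all _ fun y ↦ ?_)
  simp [ENNReal.toReal_ofReal (hyperbolicSecantPDFReal_pos _).le,
    abs_of_pos (hyperbolicSecantPDFReal_pos _), Complex.norm_exp]

theorem zero_mem_interior_integrableExpSet_hyperbolicSecantReal :
    0 ∈ interior (integrableExpSet id hyperbolicSecantReal) :=
  mem_interior_iff_mem_nhds.2 <|
    Filter.mem_of_superset (Ioo_mem_nhds (by linarith [pi_pos]) pi_div_two_pos)
      fun _ ht ↦ integrable_exp_mul_hyperbolicSecantReal (abs_lt.2 ht)

theorem memLp_id_hyperbolicSecantReal (p : ℝ≥0) : MemLp id p hyperbolicSecantReal :=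
  memLp_of_mem_interior_integrableExpSet zero_mem_interior_integrableExpSet_hyperbolicSecantReal p

theorem integrable_pow_mul_cexp_hyperbolicSecantReal (n : ℕ) (t : ℝ) :
    Integrable (fun y : ℝ ↦ (y : ℂ) ^ n * cexp (t * y * I)) hyperbolicSecantReal := by
  refine (integrable_pow_abs_of_mem_interior_integrableExpSet
    zero_mem_interior_integrableExpSet_hyperbolicSecantReal n).mono' (by fun_prop)
    (ae_of_all _ fun y ↦ ?_)
  simp [← Complex.ofReal_mul, Complex.norm_exp_ofReal_mul_I]

theorem integral_sq_mul_cexp_hyperbolicSecantReal (t : ℝ) :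
    ∫ y : ℝ, (y : ℂ) ^ 2 * cexp (t * y * I) ∂hyperbolicSecantReal
      = ((2 * (cosh t)⁻¹ ^ 3 - (cosh t)⁻¹ : ℝ) : ℂ) := by
  have h := iteratedDeriv_charFun (n := 2) (t := t)
    (by exact_mod_cast memLp_id_hyperbolicSecantReal 2)
  rw [funext charFun_hyperbolicSecantReal, iteratedDeriv_two_ofReal_sech, Complex.I_sq] at h
  push_cast at h ⊢
  linear_combination h

theorem sum_three_hs_fourier (ω : ℝ) :
    ∫ y : ℝ, Complex.exp (Complex.I * ω * y) *
        (((1 / 4) * (Real.cosh (Real.pi * y / 2))⁻¹ * (y ^ 2 + 1) : ℝ) : ℂ)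
      = (((Real.cosh ω)⁻¹ : ℝ) : ℂ) ^ 3 := by
  have hdensity (y : ℝ) : cexp (I * ω * y) *
        (((1 / 4) * (cosh (π * y / 2))⁻¹ * (y ^ 2 + 1) : ℝ) : ℂ)
      = hyperbolicSecantPDFReal y • ((1 / 2 : ℂ) *
          ((y : ℂ) ^ 2 * cexp (ω * y * I) + (y : ℂ) ^ 0 * cexp (ω * y * I))) := by
    rw [hyperbolicSecantPDFReal, Complex.real_smul, mul_inv,
      show I * (ω : ℂ) * y = ω * y * I by ring]
    push_cast
    ring
  simp_rw [hdensity, ← integral_hyperbolicSecantReal_eq_integral_smul, integral_const_mul]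
  rw [integral_add (integrable_pow_mul_cexp_hyperbolicSecantReal 2 ω)
    (integrable_pow_mul_cexp_hyperbolicSecantReal 0 ω), integral_sq_mul_cexp_hyperbolicSecantReal]
  simp only [pow_zero, one_mul, ← charFun_apply_real, charFun_hyperbolicSecantReal]
  push_cast
  ring
end
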